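/- The zero set of the Luttinger–Simpson form ω_s (with 0 < ε ≤ 1/6) is empty when s < 0, the single point {(0,0,0,0)} when s = 0, and the circle {(t,x,0,0) : x² + t² = s} when s > 0. -/

import Mathlib

/-!
The `dt∧dy` and `dx∧dy` coefficients force `y = z = 0`, which kills the `dt∧dz` and `dx∧dz`
coefficients; what remains is `3ε(x² + t² − s)`, and since `ε ≠ 0` this vanishes exactly on the
circle `x² + t² = s`, which is empty for `s < 0` and a point for `s = 0`.
-/

/-- The zero set of the Luttinger–Simpson form
`ω_s = 3ε(x²+t²−s)(dt∧dx + dy∧dz) + 6εy(t dt∧dz + x dx∧dz)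
      − 2z(dx∧dy + dt∧dz) + 2y(dt∧dy + dz∧dx)`:
the set of points `(t,x,y,z)` where all six coefficient functions vanish. -/
def LSzeroSet (s ε : ℝ) : Set (ℝ × ℝ × ℝ × ℝ) :=
  {p | 3 * ε * (p.2.1 ^ 2 + p.1 ^ 2 - s) = 0 ∧          -- dt∧dx
       2 * p.2.2.1 = 0 ∧                                 -- dt∧dy
       6 * ε * p.2.2.1 * p.1 - 2 * p.2.2.2 = 0 ∧         -- dt∧dz
       -2 * p.2.2.2 = 0 ∧                                -- dx∧dy
       6 * ε * p.2.2.1 * p.2.1 - 2 * p.2.2.1 = 0 ∧       -- dx∧dz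
       3 * ε * (p.2.1 ^ 2 + p.1 ^ 2 - s) = 0}            -- dy∧dz

def LSCircle (s : ℝ) : Set (ℝ × ℝ × ℝ × ℝ) :=
  {p | p.2.1 ^ 2 + p.1 ^ 2 = s ∧ p.2.2.1 = 0 ∧ p.2.2.2 = 0}

theorem LSzeroSet_eq_LSCircle {ε : ℝ} (s : ℝ) (hε : ε ≠ 0) : LSzeroSet s ε = LSCircle s := by
  ext ⟨t, x, y, z⟩
  simp only [LSzeroSet, LSCircle, Set.mem_ofPred_eq]
  constructor
  · rintro ⟨hdtdx, hdtdy, -, hdxdy, -, -⟩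
    have hcirc : x ^ 2 + t ^ 2 - s = 0 :=
      (mul_eq_zero.1 hdtdx).resolve_left (mul_ne_zero three_ne_zero hε)
    exact ⟨by linarith, by linarith, by linarith⟩
  · rintro ⟨hcirc, rfl, rfl⟩
    simp [hcirc]

theorem LSCircle_eq_empty_of_neg {s : ℝ} (hs : s < 0) : LSCircle s = ∅ :=
  Set.eq_empty_of_forall_notMem fun p ⟨hcirc, _⟩ => by nlinarith [sq_nonneg p.1, sq_nonneg p.2.1]

theorem LSCircle_zero : LSCircle 0 = {((0 : ℝ), (0 : ℝ), (0 : ℝ), (0 : ℝ))} := by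
  ext ⟨t, x, y, z⟩
  simp only [LSCircle, Set.mem_ofPred_eq, Set.mem_singleton_iff, Prod.mk.injEq]
  constructor
  · rintro ⟨hcirc, hy, hz⟩
    have hx : x = 0 := by nlinarith [sq_nonneg x, sq_nonneg t]
    have ht : t = 0 := by nlinarith [sq_nonneg x, sq_nonneg t]
    exact ⟨ht, hx, hy, hz⟩
  · rintro ⟨rfl, rfl, hy, hz⟩
    exact ⟨by ring, hy, hz⟩

theorem stmt9_general (s ε : ℝ) (hε : 0 < ε) :
    (s < 0 → LSzeroSet s ε = ∅) ∧
    (s = 0 → LSzeroSet s ε = {((0 : ℝ), (0 : ℝ), (0 : ℝ), (0 : ℝ))}) ∧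
    (0 < s → LSzeroSet s ε =
      {p : ℝ × ℝ × ℝ × ℝ | p.2.1 ^ 2 + p.1 ^ 2 = s ∧ p.2.2.1 = 0 ∧ p.2.2.2 = 0}) := by
  rw [LSzeroSet_eq_LSCircle s hε.ne']
  exact ⟨LSCircle_eq_empty_of_neg, fun hs => hs ▸ LSCircle_zero, fun _ => rfl⟩

/-- For `0 < ε ≤ 1/6`, the zero set of `ω_s` is empty if `s < 0`, the origin if
`s = 0`, and the circle `{x² + t² = s, y = z = 0}` if `s > 0`. -/
theorem stmt9 (s ε : ℝ) (hε : 0 < ε) (hε' : ε ≤ 1 / 6) :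
    (s < 0 → LSzeroSet s ε = ∅) ∧
    (s = 0 → LSzeroSet s ε = {((0 : ℝ), (0 : ℝ), (0 : ℝ), (0 : ℝ))}) ∧
    (0 < s → LSzeroSet s ε =
      {p : ℝ × ℝ × ℝ × ℝ | p.2.1 ^ 2 + p.1 ^ 2 = s ∧ p.2.2.1 = 0 ∧ p.2.2.2 = 0}) :=
  stmt9_general s ε hε
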